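/- The model-predicted model-ROC curve is always concave: for any integrable intensity λ : W → [0,∞) satisfying the regularity assumptions (the cdf of λ(U) for uniform U on W is continuous and strictly increasing on the range of λ), the curve R_{λ,λ}(p) = TP(FP⁻¹(p)), with TP(t) = ∫_W 1{λ(u) > t} λ(u) du / ∫_W λ du and FP(t) = |{u : λ(u) > t}|/|W|, is concave on [0,1]. -/

import Mathlib

/-!
Lowering the threshold from `t` to `s` adds the band `{s < λ ≤ t}` to the superlevel set: FP grows
by its normalised measure and TP by the normalised integral of `λ` over it, so the chord of the ROC
curve across the band has slope `|W| / ∫ λ` times a value of `λ` in `[s, t]`. As `FP⁻¹` is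
decreasing, the chord slopes of `p ↦ TP (FP⁻¹ p)` to the left of `q` are at least
`(|W| / ∫ λ) · FP⁻¹ q` and those to its right at most that, which is concavity.
-/

open MeasureTheory Set

noncomputable def spatFP {W : Type*} [MeasurableSpace W] (μ : Measure W) (lam : W → ℝ)
    (t : ℝ) : ℝ :=
  (μ {u | t < lam u}).toReal / (μ Set.univ).toReal

/-- Theoretical model true positive rate: the fraction of total intensity mass
captured above the threshold `t`. -/
noncomputable def modelTP {W : Type*} [MeasurableSpace W] (μ : Measure W)
    (lam : W → ℝ) (t : ℝ) : ℝ :=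
  (∫ u in {u | t < lam u}, lam u ∂μ) / ∫ u, lam u ∂μ

theorem concaveOn_comp_of_chord_bounds {s : Set ℝ} (hs : Convex ℝ s) {F T G g : ℝ → ℝ}
    (hF : Antitone F) (hFG : ∀ p ∈ s, F (G p) = p)
    (hlow : ∀ a b, a ≤ b → g a * (F a - F b) ≤ T a - T b)
    (hup : ∀ a b, a ≤ b → T a - T b ≤ g b * (F a - F b)) :
    ConcaveOn ℝ s (T ∘ G) := by
  have hG : ∀ p ∈ s, ∀ q ∈ s, p < q → G q ≤ G p := fun p hp q hq hpq => by
    by_contra! h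
    have := hF h.le
    rw [hFG p hp, hFG q hq] at this
    exact hpq.not_ge this
  refine concaveOn_of_slope_anti_adjacent hs fun {p q r} hp hr hpq hqr => ?_
  have hq : q ∈ s := hs.ordConnected.out hp hr ⟨hpq.le, hqr.le⟩
  have hright := hup (G r) (G q) (hG q hq r hr hqr)
  have hleft := hlow (G q) (G p) (hG p hp q hq hpq)
  rw [hFG r hr, hFG q hq] at hright
  rw [hFG q hq, hFG p hp] at hleft
  calc (T (G r) - T (G q)) / (r - q) ≤ g (G q) := (div_le_iff₀ (sub_pos.2 hqr)).2 hright
    _ ≤ (T (G q) - T (G p)) / (q - p) := (le_div_iff₀ (sub_pos.2 hpq)).2 hleft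

section Threshold

variable {W : Type*} [MeasurableSpace W] {μ : Measure W} {lam : W → ℝ}

theorem spatFP_antitone [IsFiniteMeasure μ] : Antitone (spatFP μ lam) := fun _ _ hst =>
  div_le_div_of_nonneg_right
    (ENNReal.toReal_mono (measure_ne_top _ _) (measure_mono fun _ hu => hst.trans_lt hu))
    ENNReal.toReal_nonneg

theorem spatFP_sub_spatFP [IsFiniteMeasure μ] (hmeas : Measurable lam) {s t : ℝ} (hst : s ≤ t) :
    spatFP μ lam s - spatFP μ lam t = μ.real (lam ⁻¹' Ioc s t) / μ.real univ := by
  rw [← Ioi_sdiff_Ioi, preimage_sdiff,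
    measureReal_sdiff (preimage_mono (Ioi_subset_Ioi hst)) (hmeas measurableSet_Ioi), sub_div]
  rfl

theorem modelTP_sub_modelTP (hmeas : Measurable lam) (hint : Integrable lam μ) {s t : ℝ}
    (hst : s ≤ t) :
    modelTP μ lam s - modelTP μ lam t
      = (∫ u in lam ⁻¹' Ioc s t, lam u ∂μ) / ∫ u, lam u ∂μ := by
  rw [← Ioi_sdiff_Ioi, preimage_sdiff, setIntegral_sdiff (hmeas measurableSet_Ioi)
    hint.integrableOn (preimage_mono (Ioi_subset_Ioi hst)), sub_div]
  rfl

theorem mul_measureReal_le_setIntegral_preimage_Ioc [IsFiniteMeasure μ] (hmeas : Measurable lam)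
    (hint : Integrable lam μ) (s t : ℝ) :
    s * μ.real (lam ⁻¹' Ioc s t) ≤ ∫ u in lam ⁻¹' Ioc s t, lam u ∂μ :=
  setIntegral_ge_of_const_le_real (hmeas measurableSet_Ioc) (measure_ne_top _ _)
    (fun _ hu => hu.1.le) hint.integrableOn

theorem setIntegral_preimage_Ioc_le_mul_measureReal [IsFiniteMeasure μ] (hmeas : Measurable lam)
    (hint : Integrable lam μ) (s t : ℝ) :
    ∫ u in lam ⁻¹' Ioc s t, lam u ∂μ ≤ t * μ.real (lam ⁻¹' Ioc s t) := by
  calc ∫ u in lam ⁻¹' Ioc s t, lam u ∂μ ≤ ∫ _ in lam ⁻¹' Ioc s t, t ∂μ :=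
        setIntegral_mono_on hint.integrableOn (integrableOn_const (measure_ne_top _ _))
          (hmeas measurableSet_Ioc) fun _ hu => hu.2
    _ = t * μ.real (lam ⁻¹' Ioc s t) := by rw [setIntegral_const, smul_eq_mul, mul_comm]

theorem modelTP_chord_bounds [IsFiniteMeasure μ] (hμ : μ univ ≠ 0) (hmeas : Measurable lam)
    (hint : Integrable lam μ) (hpos : 0 < ∫ u, lam u ∂μ) {s t : ℝ} (hst : s ≤ t) :
    s * (μ.real univ / ∫ u, lam u ∂μ) * (spatFP μ lam s - spatFP μ lam t)
        ≤ modelTP μ lam s - modelTP μ lam t ∧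
      modelTP μ lam s - modelTP μ lam t
        ≤ t * (μ.real univ / ∫ u, lam u ∂μ) * (spatFP μ lam s - spatFP μ lam t) := by
  have hM : 0 < μ.real univ := ENNReal.toReal_pos hμ (measure_ne_top _ _)
  have rescale : ∀ x,
      x * (μ.real univ / ∫ u, lam u ∂μ) * (μ.real (lam ⁻¹' Ioc s t) / μ.real univ)
        = x * μ.real (lam ⁻¹' Ioc s t) / ∫ u, lam u ∂μ := fun x => by field_simp
  rw [spatFP_sub_spatFP hmeas hst, modelTP_sub_modelTP hmeas hint hst, rescale, rescale]
  exact ⟨div_le_div_of_nonneg_right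
      (mul_measureReal_le_setIntegral_preimage_Ioc hmeas hint s t) hpos.le,
    div_le_div_of_nonneg_right
      (setIntegral_preimage_Ioc_le_mul_measureReal hmeas hint s t) hpos.le⟩

end Threshold

theorem model_predicted_roc_concave_general
    {W : Type*} [MeasurableSpace W] (μ : Measure W) [IsFiniteMeasure μ]
    (hμ0 : 0 < μ Set.univ)
    (lam : W → ℝ) (hmeas : Measurable lam)
    (hint : Integrable lam μ) (hpos : 0 < ∫ u, lam u ∂μ)
    (FPinv : ℝ → ℝ)
    (hinv : ∀ p ∈ Set.Icc (0 : ℝ) 1, spatFP μ lam (FPinv p) = p) :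
    ConcaveOn ℝ (Set.Icc (0 : ℝ) 1) (fun p => modelTP μ lam (FPinv p)) :=
  concaveOn_comp_of_chord_bounds (convex_Icc 0 1) spatFP_antitone hinv
    (fun _ _ hst => (modelTP_chord_bounds hμ0.ne' hmeas hint hpos hst).1)
    (fun _ _ hst => (modelTP_chord_bounds hμ0.ne' hmeas hint hpos hst).2)

/-- the model-predicted model-ROC curve is always concave.
For an integrable intensity `λ ≥ 0` whose spatial FP function is continuous and
strictly decreasing on the range of `λ` (so `FP⁻¹` is well defined), the curve
`R_{λ,λ}(p) = TP(FP⁻¹(p))` is concave on `[0,1]`. -/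
theorem model_predicted_roc_concave
    {W : Type*} [MeasurableSpace W] (μ : Measure W) [IsFiniteMeasure μ]
    (hμ0 : 0 < μ Set.univ)
    (lam : W → ℝ) (hmeas : Measurable lam) (hnonneg : ∀ u, 0 ≤ lam u)
    (hint : Integrable lam μ) (hpos : 0 < ∫ u, lam u ∂μ)
    (hcont : Continuous (spatFP μ lam))
    (hanti : StrictAntiOn (spatFP μ lam) (Set.range lam))
    (FPinv : ℝ → ℝ)
    (hinv : ∀ p ∈ Set.Icc (0 : ℝ) 1, spatFP μ lam (FPinv p) = p) :
    ConcaveOn ℝ (Set.Icc (0 : ℝ) 1) (fun p => modelTP μ lam (FPinv p)) :=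
  model_predicted_roc_concave_general μ hμ0 lam hmeas hint hpos FPinv hinv
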